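/- arXiv:1106.3836 — 3 statements merged into one kernel-verified Lean document; each statement's English description precedes it below -/
import Mathlib

section
/- Every Čech-complete space contains a non-empty compact subset of countable character. -/
/-!
Embed `X` by `e` into a compact Hausdorff space `B` with range `⋂ n, G n`, each `G n` open.
Starting at a point `e x₀`, regularity of `B` gives closed neighbourhoods `K n ⊆ G n` of
`e x₀` with `K (n + 1) ⊆ interior (K n)`. Their intersection `F` is compact and lies in the
range of `e`, and by compactness every open set containing `F` already contains some `K n`,
so the interiors of the `K n` witness countable character. Pulling `F` back along `e` gives
the required compact subset of `X`.
-/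

open Set

universe u

/-- A compact set `F` has countable character in `X`: there is a countable family of open
neighborhoods of `F` such that every open set containing `F` contains a member of it. -/
def HasCountableChar {X : Type*} [TopologicalSpace X] (A : Set X) : Prop :=
  ∃ U : ℕ → Set X, (∀ n, IsOpen (U n) ∧ A ⊆ U n) ∧
    ∀ V : Set X, IsOpen V → A ⊆ V → ∃ n, U n ⊆ V

/-- A Tychonoff space is Čech-complete if it embeds densely into a compact Hausdorff
space as a Gδ subset. -/
def CechComplete (X : Type u) [TopologicalSpace X] : Prop :=
  ∃ (B : Type u) (tB : TopologicalSpace B) (e : X → B),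
    CompactSpace B ∧ T2Space B ∧ Topology.IsEmbedding e ∧ DenseRange e ∧ IsGδ (Set.range e)

open Filter Topology

theorem HasCountableChar.preimage {X Y : Type*} [TopologicalSpace X] [TopologicalSpace Y]
    {e : X → Y} (he : IsInducing e) {F : Set Y} (hF : F ⊆ range e) (h : HasCountableChar F) :
    HasCountableChar (e ⁻¹' F) := by
  obtain ⟨U, hU, hbasis⟩ := h
  refine ⟨fun n => e ⁻¹' U n,
    fun n => ⟨(hU n).1.preimage he.continuous, preimage_mono (hU n).2⟩, ?_⟩
  intro V hV hFV
  obtain ⟨V', hV', rfl⟩ := he.isOpen_iff.1 hV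
  have hFV' : F ⊆ V' := by
    rintro _ hy
    obtain ⟨x, rfl⟩ := hF hy
    exact hFV hy
  obtain ⟨n, hn⟩ := hbasis V' hV' hFV'
  exact ⟨n, preimage_mono hn⟩

theorem hasCountableChar_iInter_of_succ_subset_interior {X : Type*} [TopologicalSpace X]
    {K : ℕ → Set X} (hK : ∀ n, IsCompact (K n)) (hKc : ∀ n, IsClosed (K n))
    (hsucc : ∀ n, K (n + 1) ⊆ interior (K n)) : HasCountableChar (⋂ n, K n) := by
  have hanti : Antitone K :=
    antitone_nat_of_succ_le fun n => (hsucc n).trans interior_subset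
  refine ⟨fun n => interior (K n), fun n => ⟨isOpen_interior,
    (iInter_subset K (n + 1)).trans (hsucc n)⟩, fun V hV hFV => ?_⟩
  obtain ⟨n, hn⟩ := exists_subset_nhds_of_isCompact' hanti.directed_ge hK hKc
    fun x hx => hV.mem_nhds (hFV hx)
  exact ⟨n, interior_subset.trans hn⟩

theorem exists_isClosed_nhds_succ_subset_interior {X : Type*} [TopologicalSpace X]
    [RegularSpace X] {x : X} {G : ℕ → Set X} (hG : ∀ n, G n ∈ 𝓝 x) :
    ∃ K : ℕ → Set X, ∀ n, K n ∈ 𝓝 x ∧ IsClosed (K n) ∧ K n ⊆ G n ∧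
      K (n + 1) ⊆ interior (K n) := by
  choose! shrink hshrink using fun s (hs : s ∈ 𝓝 x) => (closed_nhds_basis x).mem_iff.1 hs
  let K : ℕ → Set X := fun n =>
    Nat.rec (shrink (G 0)) (fun n Kn => shrink (interior Kn ∩ G (n + 1))) n
  have hnext : ∀ n, K n ∈ 𝓝 x → interior (K n) ∩ G (n + 1) ∈ 𝓝 x :=
    fun n hn => inter_mem (interior_mem_nhds.2 hn) (hG (n + 1))
  have hnhds : ∀ n, K n ∈ 𝓝 x := by
    intro n
    induction n with
    | zero => exact (hshrink _ (hG 0)).1.1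
    | succ n ih => exact (hshrink _ (hnext n ih)).1.1
  refine ⟨K, fun n => ⟨hnhds n, ?_, ?_, ?_⟩⟩
  · cases n with
    | zero => exact (hshrink _ (hG 0)).1.2
    | succ n => exact (hshrink _ (hnext n (hnhds n))).1.2
  · cases n with
    | zero => exact (hshrink _ (hG 0)).2
    | succ n => exact (hshrink _ (hnext n (hnhds n))).2.trans inter_subset_right
  · exact (hshrink _ (hnext n (hnhds n))).2.trans inter_subset_left

theorem IsGδ.exists_isCompact_hasCountableChar_subset {B : Type*} [TopologicalSpace B]
    [CompactSpace B] [T2Space B] {G : Set B} (hG : IsGδ G) {x : B} (hx : x ∈ G) :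
    ∃ F ⊆ G, x ∈ F ∧ IsCompact F ∧ HasCountableChar F := by
  obtain ⟨U, hUo, rfl⟩ := hG.eq_iInter_nat
  obtain ⟨K, hK⟩ := exists_isClosed_nhds_succ_subset_interior
    fun n => (hUo n).mem_nhds (mem_iInter.1 hx n)
  refine ⟨⋂ n, K n, iInter_mono fun n => (hK n).2.2.1,
    mem_iInter.2 fun n => mem_of_mem_nhds (hK n).1,
    (isClosed_iInter fun n => (hK n).2.1).isCompact, ?_⟩
  exact hasCountableChar_iInter_of_succ_subset_interior (fun n => (hK n).2.1.isCompact)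
    (fun n => (hK n).2.1) fun n => (hK n).2.2.2

theorem stmt14_general {X : Type u} [TopologicalSpace X] [Nonempty X]
    (h : CechComplete X) :
    ∃ F : Set X, F.Nonempty ∧ IsCompact F ∧ HasCountableChar F := by
  obtain ⟨B, _, e, _, _, he, -, hGδ⟩ := h
  obtain ⟨x₀⟩ := ‹Nonempty X›
  obtain ⟨F, hFe, hx₀, hFc, hFchar⟩ :=
    hGδ.exists_isCompact_hasCountableChar_subset (mem_range_self x₀)
  exact ⟨e ⁻¹' F, ⟨x₀, hx₀⟩, he.isInducing.isCompact_preimage' hFc hFe,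
    hFchar.preimage he.isInducing hFe⟩

/-- every (nonempty) Čech-complete space contains a nonempty compact subset
of countable character. -/
theorem stmt14 {X : Type u} [TopologicalSpace X] [T35Space X] [Nonempty X]
    (h : CechComplete X) :
    ∃ F : Set X, F.Nonempty ∧ IsCompact F ∧ HasCountableChar F :=
  stmt14_general h
end

section
/- Let X be a Tychonoff space, Z a dense subspace of an open set U ⊆ X, and F a compact subset of Z having countable character in Z. Then F has countable character in X. -/
/-! Write the countable base `V n` of `F` in `Z` as traces `W n ∩ Z` of open sets of `X`; then
the sets `W n ∩ U` form a base at `F` in `X`. Given an open `O ⊇ F`, regularity yields an open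
`G ⊇ F` with `closure G ⊆ O`; if `W n ∩ Z ⊆ G`, density of `Z` in the open set `W n ∩ U` gives
`W n ∩ U ⊆ closure (W n ∩ Z) ⊆ closure G ⊆ O`. -/

open Set

section

variable {X : Type*} [TopologicalSpace X]

theorem HasCountableChar.exists_trace_base {Z F : Set X} (hFZ : F ⊆ Z)
    (hχ : HasCountableChar ((Subtype.val ⁻¹' F) : Set Z)) :
    ∃ W : ℕ → Set X, (∀ n, IsOpen (W n) ∧ F ⊆ W n) ∧
      ∀ G : Set X, IsOpen G → F ⊆ G → ∃ n, W n ∩ Z ⊆ G := by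
  obtain ⟨V, hV, hVbase⟩ := hχ
  choose W hWopen hWV using fun n => isOpen_induced_iff.mp (hV n).1
  refine ⟨W, fun n => ⟨hWopen n, fun x hx => ?_⟩, fun G hG hFG => ?_⟩
  · have hxV : (⟨x, hFZ hx⟩ : Z) ∈ V n := (hV n).2 hx
    rwa [← hWV n] at hxV
  · obtain ⟨n, hn⟩ := hVbase _ (hG.preimage continuous_subtype_val) fun x hx => hFG hx
    refine ⟨n, ?_⟩
    rintro x ⟨hxW, hxZ⟩
    have hxV : (⟨x, hxZ⟩ : Z) ∈ V n := by rwa [← hWV n]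
    exact hn hxV

theorem inter_subset_closure_of_inter_subset {U Z W G : Set X} (hdense : U ⊆ closure Z)
    (hW : IsOpen W) (hWG : W ∩ Z ⊆ G) : W ∩ U ⊆ closure G :=
  calc W ∩ U ⊆ W ∩ closure Z := inter_subset_inter_right W hdense
    _ ⊆ closure (W ∩ Z) := hW.inter_closure
    _ ⊆ closure G := closure_mono hWG

theorem HasCountableChar.of_subtype_of_dense [RegularSpace X] {U Z F : Set X} (hU : IsOpen U)
    (hZU : Z ⊆ U) (hdense : U ⊆ closure Z) (hFZ : F ⊆ Z) (hF : IsCompact F)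
    (hχ : HasCountableChar ((Subtype.val ⁻¹' F) : Set Z)) :
    HasCountableChar F := by
  obtain ⟨W, hW, hWbase⟩ := hχ.exists_trace_base hFZ
  refine ⟨fun n => W n ∩ U, fun n => ⟨(hW n).1.inter hU, subset_inter (hW n).2 (hFZ.trans hZU)⟩,
    fun O hO hFO => ?_⟩
  obtain ⟨G, hG, hFG, hGO⟩ := hF.exists_isOpen_closure_subset (hO.mem_nhdsSet.mpr hFO)
  obtain ⟨n, hn⟩ := hWbase G hG hFG
  exact ⟨n, (inter_subset_closure_of_inter_subset hdense (hW n).1 hn).trans hGO⟩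

end

/-- if `Z` is dense in an open set `U ⊆ X` and `F ⊆ Z` is compact with
countable character in the subspace `Z`, then `F` has countable character in `X`. -/
theorem stmt15 {X : Type*} [TopologicalSpace X] [T35Space X]
    (U Z F : Set X) (hU : IsOpen U) (hZU : Z ⊆ U) (hdense : U ⊆ closure Z)
    (hFZ : F ⊆ Z) (hF : IsCompact F)
    (hχ : HasCountableChar ((Subtype.val ⁻¹' F) : Set Z)) :
    HasCountableChar F :=
  hχ.of_subtype_of_dense hU hZU hdense hFZ hF
end

section
/- If G is a non-locally compact paratopological group with some remainder failing the Baire property, then G is of countable type, and hence every remainder of G is Lindelöf. -/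
/-!
Since `G` is homogeneous and not locally compact, every remainder `Y = B \ e(G)` is dense in
`B`. If `Y` is not Baire, some nonempty `Gδ` subset of the compact space `B` misses `Y`; a fibre
of a map from `B` to the Hilbert cube inside it is a nonempty compact subset of `G` of countable
character, and its translates `C k⁻¹ K` show that `G` has countable type. Conversely, for an open
cover of any remainder, the compact set it misses sits in a compact set `L` of countable
character, whose complement in the compactification is σ-compact and still covered.
-/

open Set

universe u

/-- A space is of countable type if every compact subset is contained in a compact
subset having countable character. -/
def CountableType (X : Type*) [TopologicalSpace X] : Prop :=
  ∀ K : Set X, IsCompact K → ∃ K' : Set X, IsCompact K' ∧ K ⊆ K' ∧ HasCountableChar K'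

open Topology Pointwise

section CountableCharacter

variable {X Y : Type*} [TopologicalSpace X] [TopologicalSpace Y]

lemma HasCountableChar.isSigmaCompact_compl [T1Space X] [CompactSpace X] {K : Set X}
    (h : HasCountableChar K) : IsSigmaCompact Kᶜ := by
  obtain ⟨U, hU, hbasis⟩ := h
  refine ⟨fun n => (U n)ᶜ, fun n => (hU n).1.isClosed_compl.isCompact, ?_⟩
  ext y
  simp only [mem_iUnion, mem_compl_iff]
  refine ⟨fun ⟨n, hn⟩ hy => hn ((hU n).2 hy), fun hy => ?_⟩
  obtain ⟨n, hn⟩ := hbasis {y}ᶜ isOpen_compl_singleton (subset_compl_singleton_iff.mpr hy)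
  exact ⟨n, fun hyU => hn hyU rfl⟩

lemma hasCountableChar_preimage_singleton [CompactSpace X] [T2Space Y]
    [FirstCountableTopology Y] {g : X → Y} (hg : Continuous g) (p : Y) :
    HasCountableChar (g ⁻¹' {p}) := by
  obtain ⟨N, hN⟩ := (𝓝 p).exists_antitone_basis
  refine ⟨fun n => g ⁻¹' interior (N n), fun n => ⟨isOpen_interior.preimage hg, ?_⟩, ?_⟩
  · rintro x rfl
    exact mem_interior_iff_mem_nhds.mpr (hN.mem n)
  · intro V hV hpV
    have hp : p ∉ g '' Vᶜ := by
      rintro ⟨x, hxV, rfl⟩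
      exact hxV (hpV rfl)
    have hclosed : IsClosed (g '' Vᶜ) := (hV.isClosed_compl.isCompact.image hg).isClosed
    obtain ⟨n, -, hn⟩ := hN.1.mem_iff.mp (hclosed.isOpen_compl.mem_nhds hp)
    refine ⟨n, fun x hx => ?_⟩
    by_contra hxV
    exact hn (interior_subset hx) ⟨x, hxV, rfl⟩

lemma exists_continuous_preimage_subset_of_isGδ [CompletelyRegularSpace X] {S : Set X}
    (hS : IsGδ S) {x : X} (hx : x ∈ S) :
    ∃ g : X → (ℕ → unitInterval), Continuous g ∧ g ⁻¹' {g x} ⊆ S := by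
  obtain ⟨V, hVo, rfl⟩ := hS.eq_iInter_nat
  have hxV : ∀ n, x ∉ (V n)ᶜ := fun n => not_not.mpr (mem_iInter.mp hx n)
  choose f hf hfx hf1 using fun n =>
    CompletelyRegularSpace.completely_regular x _ (hVo n).isClosed_compl (hxV n)
  refine ⟨fun y n => f n y, continuous_pi hf, fun y hy => mem_iInter.mpr fun n => ?_⟩
  have hy0 : f n y = 0 := (congrFun hy n).trans (hfx n)
  by_contra hyV
  exact zero_ne_one (hy0.symm.trans (hf1 n hyV))

lemma exists_isCompact_hasCountableChar_subset_of_isGδ [CompactSpace X] [T2Space X]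
    {S : Set X} (hS : IsGδ S) {x : X} (hx : x ∈ S) :
    ∃ K ⊆ S, x ∈ K ∧ IsCompact K ∧ HasCountableChar K := by
  obtain ⟨g, hg, hgS⟩ := exists_continuous_preimage_subset_of_isGδ hS hx
  exact ⟨_, hgS, rfl, (isClosed_singleton.preimage hg).isCompact,
    hasCountableChar_preimage_singleton hg _⟩

lemma HasCountableChar.preimage_of_isInducing {e : X → Y} (he : IsInducing e) {K : Set Y}
    (hK : K ⊆ range e) (h : HasCountableChar K) : HasCountableChar (e ⁻¹' K) := by
  obtain ⟨U, hU, hbasis⟩ := h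
  refine ⟨fun n => e ⁻¹' U n, fun n => ⟨(hU n).1.preimage he.continuous,
    preimage_mono (hU n).2⟩, fun V hV hKV => ?_⟩
  obtain ⟨O, hO, rfl⟩ := he.isOpen_iff.mp hV
  have hKO : K ⊆ O := by
    intro y hy
    obtain ⟨x, rfl⟩ := hK hy
    exact hKV hy
  obtain ⟨n, hn⟩ := hbasis O hO hKO
  exact ⟨n, preimage_mono hn⟩

/-- By density, `closure O = closure (O ∩ range e)` for open `O`, so a neighbourhood base of `K`
pulled back from `Y` is again one of `e '' K`. -/
lemma HasCountableChar.image_of_denseRange [RegularSpace Y] {e : X → Y} (he : IsInducing e)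
    (hd : DenseRange e) {K : Set X} (hK : IsCompact K) (h : HasCountableChar K) :
    HasCountableChar (e '' K) := by
  obtain ⟨U, hU, hbasis⟩ := h
  choose O hO hOU using fun n => he.isOpen_iff.mp (hU n).1
  refine ⟨O, fun n => ⟨hO n, ?_⟩, fun W hW hKW => ?_⟩
  · rintro _ ⟨x, hx, rfl⟩
    have hxU : x ∈ U n := (hU n).2 hx
    rwa [← hOU n] at hxU
  obtain ⟨W', hW'o, hKW', hW'W⟩ :=
    (hK.image he.continuous).exists_isOpen_closure_subset (hW.mem_nhdsSet.mpr hKW)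
  obtain ⟨n, hn⟩ := hbasis _ (hW'o.preimage he.continuous) (image_subset_iff.mp hKW')
  refine ⟨n, ?_⟩
  have htrace : O n ∩ range e ⊆ W' := by
    rintro _ ⟨hy, x, rfl⟩
    exact hn ((hOU n) ▸ hy)
  calc O n ⊆ closure (O n ∩ range e) := hd.open_subset_closure_inter (hO n)
    _ ⊆ closure W' := closure_mono htrace
    _ ⊆ W := hW'W

end CountableCharacter

lemma exists_isGδ_nonempty_disjoint_of_not_baireSpace {X : Type*} [TopologicalSpace X]
    [BaireSpace X] {Y : Set X} (hY : Dense Y) (hnb : ¬ BaireSpace Y) :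
    ∃ S : Set X, IsGδ S ∧ S.Nonempty ∧ Disjoint S Y := by
  obtain ⟨f, hfo, hfd, hnd⟩ : ∃ f : ℕ → Set Y,
      (∀ n, IsOpen (f n)) ∧ (∀ n, Dense (f n)) ∧ ¬ Dense (⋂ n, f n) := by
    by_contra! h
    exact hnb ⟨h⟩
  choose O hO hOf using fun n => isOpen_induced_iff.mp (hfo n)
  have hOd : ∀ n, Dense (O n) := fun n =>
    (hY.denseRange_val.dense_image continuous_subtype_val (hfd n)).mono
      (hOf n ▸ image_preimage_subset _ _)
  obtain ⟨W, hWo, ⟨⟨x, hxY⟩, hxW⟩, hWf⟩ :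
      ∃ W : Set Y, IsOpen W ∧ W.Nonempty ∧ ¬ (W ∩ ⋂ n, f n).Nonempty := by
    simpa [dense_iff_inter_open] using hnd
  obtain ⟨U, hU, rfl⟩ := isOpen_induced_iff.mp hWo
  refine ⟨U ∩ ⋂ n, O n, hU.isGδ.inter (.iInter_of_isOpen hO),
    (dense_iInter_of_isOpen_nat hO hOd).inter_open_nonempty U hU ⟨x, hxW⟩, ?_⟩
  rw [disjoint_iff_forall_ne]
  rintro y ⟨hyU, hyO⟩ _ hy rfl
  refine hWf ⟨⟨y, hy⟩, hyU, mem_iInter.mpr fun n => ?_⟩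
  rw [← hOf n]
  exact mem_iInter.mp hyO n

section Group

variable {G : Type*} [TopologicalSpace G] [Group G] [ContinuousMul G]

lemma weaklyLocallyCompactSpace_of_isCompact_mem_nhds {K : Set G} (hK : IsCompact K) {x : G}
    (h : K ∈ 𝓝 x) : WeaklyLocallyCompactSpace G := by
  refine ⟨fun y ↦ ⟨(y * x⁻¹) • K, hK.smul _, ?_⟩⟩
  rw [← preimage_smul_inv]
  exact (continuous_const_smul _).continuousAt.preimage_mem_nhds (by simpa using h)

lemma HasCountableChar.mul_left {D K : Set G} (hD : IsCompact D) (hK : IsCompact K)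
    (h : HasCountableChar K) : HasCountableChar (D * K) := by
  obtain ⟨U, hU, hbasis⟩ := h
  refine ⟨fun n => D * U n, fun n => ⟨(hU n).1.mul_left, mul_subset_mul_left (hU n).2⟩,
    fun W hW hDKW => ?_⟩
  have hprod : D ×ˢ K ⊆ (fun p : G × G => p.1 * p.2) ⁻¹' W :=
    fun p hp => hDKW (mul_mem_mul hp.1 hp.2)
  obtain ⟨u, v, -, hv, hDu, hKv, huv⟩ :=
    generalized_tube_lemma hD hK (hW.preimage continuous_mul) hprod
  obtain ⟨n, hn⟩ := hbasis v hv hKv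
  refine ⟨n, ?_⟩
  rintro _ ⟨d, hd, y, hy, rfl⟩
  exact huv (mk_mem_prod (hDu hd) (hn hy))

lemma countableType_of_hasCountableChar {K : Set G} (hK : IsCompact K) (hne : K.Nonempty)
    (h : HasCountableChar K) : CountableType G := by
  obtain ⟨k, hk⟩ := hne
  intro C hC
  have hD : IsCompact (C * {k⁻¹}) := hC.mul isCompact_singleton
  refine ⟨C * {k⁻¹} * K, hD.mul hK, fun c hc => ?_, h.mul_left hD hK⟩
  simpa using mul_mem_mul (mul_mem_mul hc (mem_singleton k⁻¹)) hk

end Group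

section Remainder

variable {G B : Type*} [TopologicalSpace G] [TopologicalSpace B]

lemma dense_compl_range_of_not_locallyCompactSpace [Group G] [ContinuousMul G]
    [LocallyCompactSpace B] [R1Space B] (hnlc : ¬ LocallyCompactSpace G) {e : G → B}
    (he : IsInducing e) : Dense ((range e)ᶜ : Set B) := by
  have : R1Space G := he.r1Space
  by_contra hnd
  obtain ⟨U, hU, ⟨x, hxU⟩, hUe⟩ : ∃ U : Set B, IsOpen U ∧ U.Nonempty ∧ U ⊆ range e := by
    simpa [dense_iff_inter_open, ← subset_def, inter_compl_nonempty_iff] using hnd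
  obtain ⟨g, rfl⟩ := hUe hxU
  obtain ⟨t, ht, htU, htc⟩ := local_compact_nhds (hU.mem_nhds hxU)
  have := weaklyLocallyCompactSpace_of_isCompact_mem_nhds
    ((he.isCompact_preimage_iff (htU.trans hUe)).2 htc)
    (he.continuous.continuousAt.preimage_mem_nhds ht)
  exact hnlc inferInstance

lemma exists_nonempty_isCompact_hasCountableChar_of_not_baireSpace [Group G] [ContinuousMul G]
    [CompactSpace B] [T2Space B] (hnlc : ¬ LocallyCompactSpace G) {e : G → B}
    (he : IsInducing e) (hY : ¬ BaireSpace ((range e)ᶜ : Set B)) :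
    ∃ K : Set G, IsCompact K ∧ K.Nonempty ∧ HasCountableChar K := by
  obtain ⟨S, hS, ⟨x, hx⟩, hSY⟩ := exists_isGδ_nonempty_disjoint_of_not_baireSpace
    (dense_compl_range_of_not_locallyCompactSpace hnlc he) hY
  obtain ⟨L, hLS, hxL, hLc, hL⟩ := exists_isCompact_hasCountableChar_subset_of_isGδ hS hx
  have hLe : L ⊆ range e := by simpa using hLS.trans hSY.subset_compl_right
  obtain ⟨g, rfl⟩ := hLe hxL
  exact ⟨e ⁻¹' L, (he.isCompact_preimage_iff hLe).2 hLc, ⟨g, hxL⟩,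
    hL.preimage_of_isInducing he hLe⟩

/-- One direction of the Henriksen–Isbell theorem. -/
lemma lindelofSpace_compl_range_of_countableType [CompactSpace B] [T2Space B]
    (hct : CountableType G) {e : G → B} (he : IsInducing e) (hd : DenseRange e) :
    LindelofSpace ((range e)ᶜ : Set B) := by
  rw [← isLindelof_iff_lindelofSpace, isLindelof_iff_countable_subcover]
  intro ι U hUo hcov
  have hFe : (⋃ i, U i)ᶜ ⊆ range e := compl_subset_comm.mp hcov
  obtain ⟨K, hK, hFK, hKchar⟩ := hct _
    ((he.isCompact_preimage_iff hFe).2 (isOpen_iUnion hUo).isClosed_compl.isCompact)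
  have hLU : (e '' K)ᶜ ⊆ ⋃ i, U i := by
    refine compl_subset_comm.mp fun y hy => ?_
    obtain ⟨g, rfl⟩ := hFe hy
    exact mem_image_of_mem e (hFK hy)
  obtain ⟨s, hs, hsU⟩ :=
    (hKchar.image_of_denseRange he hd hK).isSigmaCompact_compl.isLindelof.elim_countable_subcover
      U hUo hLU
  exact ⟨s, hs, (compl_subset_compl.mpr (image_subset_range e K)).trans hsU⟩

end Remainder

theorem stmt17_general {G B : Type u} [TopologicalSpace G] [Group G] [ContinuousMul G]
    [TopologicalSpace B] [CompactSpace B] [T2Space B]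
    (hnlc : ¬ LocallyCompactSpace G)
    (e : G → B) (he : Topology.IsEmbedding e)
    (hY : ¬ BaireSpace ((Set.range e)ᶜ : Set B)) :
    CountableType G ∧
      ∀ (B' : Type u) (tB' : TopologicalSpace B') (e' : G → B'),
        CompactSpace B' → T2Space B' → Topology.IsEmbedding e' → DenseRange e' →
          LindelofSpace ((Set.range e')ᶜ : Set B') := by
  obtain ⟨K, hK, hne, hchar⟩ :=
    exists_nonempty_isCompact_hasCountableChar_of_not_baireSpace hnlc he.isInducing hY
  have hct : CountableType G := countableType_of_hasCountableChar hK hne hchar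
  exact ⟨hct, fun B' _ e' _ _ he' hd' =>
    lindelofSpace_compl_range_of_countableType hct he'.isInducing hd'⟩

/-- if `G` is a non-locally compact paratopological group with some
remainder failing the Baire property, then `G` is of countable type, and hence every
remainder of `G` is Lindelöf. -/
theorem stmt17 {G B : Type u} [TopologicalSpace G] [T35Space G] [Group G] [ContinuousMul G]
    [TopologicalSpace B] [CompactSpace B] [T2Space B]
    (hnlc : ¬ LocallyCompactSpace G)
    (e : G → B) (he : Topology.IsEmbedding e) (hd : DenseRange e)
    (hY : ¬ BaireSpace ((Set.range e)ᶜ : Set B)) :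
    CountableType G ∧
      ∀ (B' : Type u) (tB' : TopologicalSpace B') (e' : G → B'),
        CompactSpace B' → T2Space B' → Topology.IsEmbedding e' → DenseRange e' →
          LindelofSpace ((Set.range e')ᶜ : Set B') :=
  stmt17_general hnlc e he hY
end
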